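/- arXiv:1909.09988 — 6 statements merged into one kernel-verified Lean document; each statement's English description precedes it below -/
import Mathlib

section
/- Let (X,d) be a metric space, ε > 0, and x, y ∈ X with d_ε(x,y) < ∞. Let N_ε(x,y) denote the minimal N such that there exists an ε-chain {x_i}_{i=0}^N from x to y. Then ⌈d_ε(x,y)/ε⌉ ≤ N_ε(x,y) ≤ 9 ⌈d_ε(x,y)/ε⌉. -/
open Metric Set Filter

/-- `c` is an ε-chain of length `N` from `x` to `y`. -/
def IsEpsChain {X : Type*} [MetricSpace X] (ε : ℝ) (x y : X) (N : ℕ) (c : ℕ → X) : Prop :=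
  c 0 = x ∧ c N = y ∧ ∀ i < N, dist (c i) (c (i + 1)) < ε

/-- The ε-chain distance `d_ε(x,y)`: infimum of chain lengths, `∞` if no chain exists. -/
noncomputable def chainDist {X : Type*} [MetricSpace X] (ε : ℝ) (x y : X) : ENNReal :=
  ⨅ p : {p : ℕ × (ℕ → X) // IsEpsChain ε x y p.1 p.2},
    ∑ i ∈ Finset.range p.1.1, ENNReal.ofReal (dist (p.1.2 i) (p.1.2 (i + 1)))

/-- `N_ε(x,y)`: minimal number of steps of an ε-chain from `x` to `y`. -/
noncomputable def chainCount {X : Type*} [MetricSpace X] (ε : ℝ) (x y : X) : ℕ :=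
  sInf {N | ∃ c : ℕ → X, IsEpsChain ε x y N c}

/-!
The lower bound holds because every step of an ε-chain is shorter than ε. For the upper bound,
take a chain of length less than `2 d_ε(x,y)` and, as long as some `x_i, x_{i+2}` are closer than ε,
delete `x_{i+1}`: by the triangle inequality this keeps an ε-chain and does not increase its length.
In the resulting chain every pair of consecutive steps has length at least ε, so it has fewer than
`4 ⌈d_ε(x,y)/ε⌉` steps.
-/

open Finset

section Chains

variable {X : Type*} [MetricSpace X] {ε : ℝ} {x y : X} {N : ℕ} {c : ℕ → X}

def chainLength (c : ℕ → X) (N : ℕ) : ℝ :=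
  ∑ i ∈ range N, dist (c i) (c (i + 1))

lemma chainLength_add_two (c : ℕ → X) (N : ℕ) :
    chainLength c (N + 2) = chainLength c N + dist (c N) (c (N + 1)) + dist (c (N + 1)) (c (N + 2)) := by
  simp only [chainLength, sum_range_succ]

lemma IsEpsChain.dist_le_chainLength (hc : IsEpsChain ε x y N c) : dist x y ≤ chainLength c N :=
  hc.1 ▸ hc.2.1 ▸ dist_le_range_sum_dist c N

lemma IsEpsChain.chainLength_le (hc : IsEpsChain ε x y N c) : chainLength c N ≤ N * ε := by
  simpa [chainLength] using sum_le_sum fun i hi => (hc.2.2 i (mem_range.mp hi)).le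

lemma IsEpsChain.chainDist_le (hc : IsEpsChain ε x y N c) :
    chainDist ε x y ≤ ENNReal.ofReal (chainLength c N) := by
  rw [chainLength, ENNReal.ofReal_sum_of_nonneg fun i _ => dist_nonneg]
  exact iInf_le_of_le ⟨(N, c), hc⟩ le_rfl

lemma IsEpsChain.toReal_chainDist_le (hc : IsEpsChain ε x y N c) :
    (chainDist ε x y).toReal ≤ N * ε :=
  ENNReal.toReal_le_of_le_ofReal (dist_nonneg.trans (hc.dist_le_chainLength.trans hc.chainLength_le))
    (hc.chainDist_le.trans (ENNReal.ofReal_le_ofReal hc.chainLength_le))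

lemma dist_le_toReal_chainDist (hfin : chainDist ε x y < ⊤) :
    dist x y ≤ (chainDist ε x y).toReal := by
  refine (ENNReal.ofReal_le_iff_le_toReal hfin.ne).mp (le_iInf fun p => ?_)
  rw [← ENNReal.ofReal_sum_of_nonneg fun i _ => dist_nonneg]
  exact ENNReal.ofReal_le_ofReal p.2.dist_le_chainLength

lemma exists_chainLength_lt {r : ℝ} (hfin : chainDist ε x y < ⊤)
    (hr : (chainDist ε x y).toReal < r) :
    ∃ N c, IsEpsChain ε x y N c ∧ chainLength c N < r := by
  obtain ⟨p, hp⟩ := iInf_lt_iff.mp ((ENNReal.lt_ofReal_iff_toReal_lt hfin.ne).mpr hr)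
  rw [← ENNReal.ofReal_sum_of_nonneg fun i _ => dist_nonneg] at hp
  exact ⟨p.1.1, p.1.2, p.2, (ENNReal.ofReal_lt_ofReal_iff'.mp hp).1⟩

lemma IsEpsChain.chainCount_le (hc : IsEpsChain ε x y N c) : chainCount ε x y ≤ N :=
  Nat.sInf_le ⟨c, hc⟩

lemma IsEpsChain.exists_isEpsChain_chainCount (hc : IsEpsChain ε x y N c) :
    ∃ c, IsEpsChain ε x y (chainCount ε x y) c :=
  Nat.sInf_mem (s := {N | ∃ c : ℕ → X, IsEpsChain ε x y N c}) ⟨N, c, hc⟩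

lemma IsEpsChain.exists_shortcut {i k : ℕ} (hc : IsEpsChain ε x y (i + 2 + k) c)
    (hi : dist (c i) (c (i + 2)) < ε) :
    ∃ c', IsEpsChain ε x y (i + 1 + k) c' ∧ chainLength c' (i + 1 + k) ≤ chainLength c (i + 2 + k) := by
  set c' : ℕ → X := fun j => if j ≤ i then c j else c (j + 1) with hc'
  have h_lt : ∀ j < i, dist (c' j) (c' (j + 1)) = dist (c j) (c (j + 1)) := fun j h => by
    simp [hc', h.le, Nat.succ_le_of_lt h]
  have h_eq : dist (c' i) (c' (i + 1)) = dist (c i) (c (i + 2)) := by simp [hc']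
  have h_gt : ∀ j, i < j → dist (c' j) (c' (j + 1)) = dist (c (j + 1)) (c (j + 2)) := fun j h => by
    simp [hc', h.not_ge, (Nat.lt_succ_of_lt h).not_ge]
  refine ⟨c', ⟨by simp [hc', hc.1], ?_, fun j hj => ?_⟩, ?_⟩
  · simpa [hc', show ¬ i + 1 + k ≤ i by omega, show i + 1 + k + 1 = i + 2 + k by omega] using hc.2.1
  · rcases lt_trichotomy j i with h | rfl | h
    · exact h_lt j h ▸ hc.2.2 j (by omega)
    · exact h_eq ▸ hi
    · exact h_gt j h ▸ hc.2.2 (j + 1) (by omega)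
  · have h_head : ∑ j ∈ range i, dist (c' j) (c' (j + 1)) = ∑ j ∈ range i, dist (c j) (c (j + 1)) :=
      sum_congr rfl fun j hj => h_lt j (mem_range.mp hj)
    have h_tail : ∑ j ∈ range k, dist (c' (i + 1 + j)) (c' (i + 1 + j + 1)) =
        ∑ j ∈ range k, dist (c (i + 2 + j)) (c (i + 2 + j + 1)) :=
      sum_congr rfl fun j _ => by
        rw [h_gt _ (by omega), show i + 1 + j + 1 = i + 2 + j by omega,
          show i + 1 + j + 2 = i + 2 + j + 1 by omega]
    simp only [chainLength, sum_range_add, sum_range_succ, h_head, h_eq, h_tail]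
    linarith [dist_triangle (c i) (c (i + 1)) (c (i + 2))]

lemma IsEpsChain.exists_spread (hc : IsEpsChain ε x y N c) :
    ∃ N' c', IsEpsChain ε x y N' c' ∧ chainLength c' N' ≤ chainLength c N ∧
      ∀ i, i + 2 ≤ N' → ε ≤ dist (c' i) (c' (i + 2)) := by
  induction N using Nat.strong_induction_on generalizing c with
  | _ N ih =>
    by_cases h_spread : ∀ i, i + 2 ≤ N → ε ≤ dist (c i) (c (i + 2))
    · exact ⟨N, c, hc, le_rfl, h_spread⟩
    push Not at h_spread
    obtain ⟨i, hiN, hi⟩ := h_spread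
    obtain ⟨k, rfl⟩ := Nat.exists_eq_add_of_le hiN
    obtain ⟨c', hc', hlen⟩ := hc.exists_shortcut hi
    obtain ⟨N', c'', hc'', hlen', h_spread⟩ := ih _ (by omega) hc'
    exact ⟨N', c'', hc'', hlen'.trans hlen, h_spread⟩

lemma half_mul_le_chainLength (h : ∀ i, i + 2 ≤ N → ε ≤ dist (c i) (c (i + 2))) :
    (N / 2 : ℕ) * ε ≤ chainLength c N := by
  induction N using Nat.twoStepInduction with
  | zero => simp [chainLength]
  | one => simp [chainLength]
  | more N ih _ =>
    have h_pair := (h N le_rfl).trans (dist_triangle (c N) (c (N + 1)) (c (N + 2)))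
    rw [chainLength_add_two, Nat.add_div_right N two_pos, Nat.cast_succ]
    linarith [ih fun i hi => h i (by omega)]

lemma IsEpsChain.chainCount_lt_two_mul {m : ℤ} (hε : 0 < ε) (hc : IsEpsChain ε x y N c)
    (hlen : chainLength c N < m * ε) : (chainCount ε x y : ℤ) < 2 * m := by
  obtain ⟨N', c', hc', hlen', h_spread⟩ := hc.exists_spread
  have h_half : ((N' / 2 : ℕ) : ℝ) < m :=
    lt_of_mul_lt_mul_right (((half_mul_le_chainLength h_spread).trans hlen').trans_lt hlen) hε.le
  have h_half' : ((N' / 2 : ℕ) : ℤ) < m :=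
    (Int.cast_lt (R := ℝ)).mp (by rwa [Int.cast_natCast])
  have := hc'.chainCount_le
  omega

end Chains

theorem stmt_3 {X : Type*} [MetricSpace X] (ε : ℝ) (hε : 0 < ε) (x y : X)
    (hfin : chainDist ε x y < ⊤) :
    ⌈(chainDist ε x y).toReal / ε⌉ ≤ (chainCount ε x y : ℤ) ∧
    (chainCount ε x y : ℤ) ≤ 9 * ⌈(chainDist ε x y).toReal / ε⌉ := by
  set D := (chainDist ε x y).toReal
  obtain ⟨N, c, hc, -⟩ := exists_chainLength_lt hfin (lt_add_one D)
  obtain ⟨c₀, hc₀⟩ := hc.exists_isEpsChain_chainCount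
  have hK : 0 ≤ ⌈D / ε⌉ := Int.ceil_nonneg (by positivity)
  refine ⟨?_, ?_⟩
  · rw [Int.ceil_le, div_le_iff₀ hε]
    exact_mod_cast hc₀.toReal_chainDist_le
  by_cases hxy : x = y
  · have h_const : IsEpsChain ε x y 0 fun _ => x := ⟨rfl, hxy, by simp⟩
    have := h_const.chainCount_le
    omega
  have hD : 0 < D := (dist_pos.mpr hxy).trans_le (dist_le_toReal_chainDist hfin)
  obtain ⟨N, c, hc, hlen⟩ := exists_chainLength_lt hfin (lt_two_mul_self hD)
  have hDK : D ≤ ⌈D / ε⌉ * ε := (div_le_iff₀ hε).mp (Int.le_ceil _)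
  have := hc.chainCount_lt_two_mul (m := 2 * ⌈D / ε⌉) hε (by push_cast; linarith)
  omega
end

section
/- Let (X,d) be a metric space in which every pair of points can be joined by an ε-chain for every ε > 0 (i.e. d_ε(x,y) < ∞ for all x,y and all ε > 0). Then (X,d) satisfies: for every x ∈ X and r > 0 such that B(x,r) ≠ X, the annulus B(x,r) \ B(x, r/2) is nonempty. -/
open Metric Set Filter

theorem stmt_4 {X : Type*} [MetricSpace X]
    (hconn : ∀ ε > (0 : ℝ), ∀ x y : X, ∃ N c, IsEpsChain ε x y N c)
    (x : X) (r : ℝ) (hr : 0 < r) (hne : Metric.ball x r ≠ Set.univ) :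
    (Metric.ball x r \ Metric.ball x (r / 2)).Nonempty := by
  obtain ⟨y, hy⟩ : ∃ y : X, y ∉ Metric.ball x r := by
    by_contra h
    push_neg at h
    exact hne (Set.eq_univ_of_forall h)
  obtain ⟨N, c, hc0, hcN, hstep⟩ := hconn (r / 2) (by linarith) x y
  have hNmem : r / 2 ≤ dist x (c N) := by
    rw [hcN, dist_comm]
    simp only [Metric.mem_ball, not_lt] at hy
    linarith
  have hex : ∃ i, r / 2 ≤ dist x (c i) := ⟨N, hNmem⟩
  classical
  set i := Nat.find hex with hi
  have hiS : r / 2 ≤ dist x (c i) := Nat.find_spec hex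
  have hiN : i ≤ N := Nat.find_min' hex hNmem
  have hi0 : i ≠ 0 := by
    intro h
    rw [h, hc0, dist_self] at hiS
    linarith
  obtain ⟨j, hj⟩ := Nat.exists_eq_succ_of_ne_zero hi0
  have hjlt : j < i := by omega
  have hjsmall : dist x (c j) < r / 2 := lt_of_not_ge (Nat.find_min hex hjlt)
  have hjN : j < N := by omega
  have hstepj := hstep j hjN
  refine ⟨c i, ?_, ?_⟩
  · rw [Metric.mem_ball, dist_comm]
    calc dist x (c i) ≤ dist x (c j) + dist (c j) (c (j + 1)) := by
          rw [hj]; exact dist_triangle _ _ _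
      _ < r := by linarith
  · rw [Metric.mem_ball, dist_comm]
    exact not_lt.2 hiS
end

section
/- Let Ψ : (0,∞) → (0,∞) be a continuous increasing bijection, and suppose there exist constants 1 < β₁ ≤ β₂ and C₁ > 1 such that C₁⁻¹ (R/r)^{β₁} ≤ Ψ(R)/Ψ(r) ≤ C₁ (R/r)^{β₂} for all 0 < r ≤ R. Define Φ(s) = sup_{r>0} (s/r − 1/Ψ(r)). Then there exists C₂ > 0 such that C₂⁻¹ (S/s)^{β₂/(β₂−1)} ≤ Φ(S)/Φ(s) ≤ C₂ (S/s)^{β₁/(β₁−1)} for all 0 < s ≤ S. -/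
open Metric Set Filter

/-- The Legendre-type transform `Φ(s) = sup_{r>0} (s/r − 1/Ψ(r))`. -/
noncomputable def PhiOf (Ψ : ℝ → ℝ) (s : ℝ) : ℝ :=
  sSup {v | ∃ r > (0 : ℝ), v = s / r - 1 / Ψ r}

/-!
Substituting `r ↦ k * r` in the supremum defining `Φ` transfers a comparison `b Ψ(r) ≤ Ψ(k r)`
for all `r` into `Φ(b s / k) ≤ b Φ(s)`, and the reverse comparison into the reverse inequality.
For `t = S / s` choose `k = (t / c)^(1 / (β - 1))`, so that the regularity factor `b = c k^β`
satisfies `b / k = t` and equals `c (t / c)^(β / (β - 1))`: the lower power bound on `Ψ` gives the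
upper bound on `Φ(S) / Φ(s)` and vice versa. The lower power bound also makes `Φ` finite and
positive, and for `S < C₁ s` the lower bound follows from monotonicity of `Φ`.
-/

open Real

section PowerAlgebra

variable {β x : ℝ}

lemma rpow_one_div_sub_one_rpow (hx : 0 ≤ x) :
    (x ^ (1 / (β - 1))) ^ β = x ^ (β / (β - 1)) := by
  rw [← rpow_mul hx, one_div_mul_eq_div]

lemma rpow_one_div_sub_one_rpow_sub_one (hβ : 1 < β) (hx : 0 ≤ x) :
    (x ^ (1 / (β - 1))) ^ (β - 1) = x := by
  rw [← rpow_mul hx, one_div_mul_cancel (by linarith), rpow_one]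

lemma mul_sub_mul_rpow_le {s a : ℝ} (hβ : 1 < β) (hs : 0 ≤ s) (ha : 0 < a) (hx : 0 ≤ x) :
    s * x - a * x ^ β ≤ s * (s / a) ^ (1 / (β - 1)) := by
  set x₀ := (s / a) ^ (1 / (β - 1))
  have hx₀ : 0 ≤ x₀ := by positivity
  rcases le_or_gt x x₀ with hle | hlt
  · have : 0 ≤ a * x ^ β := by positivity
    nlinarith
  · have hxpos : 0 < x := hx₀.trans_lt hlt
    have hpow : s / a < x ^ (β - 1) := by
      calc s / a = x₀ ^ (β - 1) := (rpow_one_div_sub_one_rpow_sub_one hβ (by positivity)).symm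
        _ < x ^ (β - 1) := rpow_lt_rpow hx₀ hlt (by linarith)
    have : s * x ≤ a * x ^ β := by
      rw [← sub_add_cancel β 1, rpow_add_one hxpos.ne', ← mul_assoc]
      exact mul_le_mul_of_nonneg_right ((div_le_iff₀' ha).1 hpow.le) hxpos.le
    have : 0 ≤ s * x₀ := by positivity
    linarith

end PowerAlgebra

section Legendre

variable {Ψ : ℝ → ℝ} {s S t r b k c β : ℝ}

lemma le_phiOf (hbdd : BddAbove {v | ∃ r > (0 : ℝ), v = s / r - 1 / Ψ r}) (hr : 0 < r) :
    s / r - 1 / Ψ r ≤ PhiOf Ψ s :=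
  le_csSup hbdd ⟨r, hr, rfl⟩

lemma phiOf_le {M : ℝ} (h : ∀ r > 0, s / r - 1 / Ψ r ≤ M) : PhiOf Ψ s ≤ M :=
  csSup_le ⟨_, 1, one_pos, rfl⟩ fun _ ⟨r, hr, hv⟩ => hv ▸ h r hr

lemma phiOf_mono (hbdd : BddAbove {v | ∃ r > (0 : ℝ), v = S / r - 1 / Ψ r}) (hsS : s ≤ S) :
    PhiOf Ψ s ≤ PhiOf Ψ S :=
  phiOf_le fun r hr => (by gcongr : s / r - 1 / Ψ r ≤ S / r - 1 / Ψ r).trans (le_phiOf hbdd hr)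

lemma phiOf_div_mul_le_mul_phiOf (hpos : ∀ r > 0, 0 < Ψ r) (hb : 0 < b) (hk : 0 < k)
    (hΨ : ∀ r > 0, b * Ψ r ≤ Ψ (k * r))
    (hbdd : BddAbove {v | ∃ r > (0 : ℝ), v = s / r - 1 / Ψ r}) :
    PhiOf Ψ (b / k * s) ≤ b * PhiOf Ψ s := by
  refine phiOf_le fun r hr => ?_
  have hkr : 0 < k * r := mul_pos hk hr
  have hΨr : b / Ψ (k * r) ≤ 1 / Ψ r := by
    rw [div_le_div_iff₀ (hpos _ hkr) (hpos r hr), one_mul]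
    exact hΨ r hr
  calc b / k * s / r - 1 / Ψ r ≤ b * (s / (k * r) - 1 / Ψ (k * r)) := by
        rw [mul_sub, mul_one_div, show b / k * s / r = b * (s / (k * r)) by field_simp]
        linarith
    _ ≤ b * PhiOf Ψ s := mul_le_mul_of_nonneg_left (le_phiOf hbdd hkr) hb.le

lemma mul_phiOf_le_phiOf_div_mul (hpos : ∀ r > 0, 0 < Ψ r) (hb : 0 < b) (hk : 0 < k)
    (hΨ : ∀ r > 0, Ψ (k * r) ≤ b * Ψ r)
    (hbdd : BddAbove {v | ∃ r > (0 : ℝ), v = b / k * s / r - 1 / Ψ r}) :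
    b * PhiOf Ψ s ≤ PhiOf Ψ (b / k * s) := by
  rw [← le_div_iff₀' hb]
  refine phiOf_le fun u hu => ?_
  rw [le_div_iff₀' hb]
  obtain ⟨r, hr, rfl⟩ : ∃ r > 0, k * r = u := ⟨u / k, div_pos hu hk, mul_div_cancel₀ u hk.ne'⟩
  have hkr : 0 < k * r := mul_pos hk hr
  have hΨr : 1 / Ψ r ≤ b / Ψ (k * r) := by
    rw [div_le_div_iff₀ (hpos r hr) (hpos _ hkr), one_mul]
    exact hΨ r hr
  calc b * (s / (k * r) - 1 / Ψ (k * r)) ≤ b / k * s / r - 1 / Ψ r := by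
        rw [mul_sub, mul_one_div, show b / k * s / r = b * (s / (k * r)) by field_simp]
        linarith
    _ ≤ PhiOf Ψ (b / k * s) := le_phiOf hbdd hr

lemma exists_scaling_factor (hβ : 1 < β) (hc : 0 < c) (hct : c ≤ t) :
    ∃ k ≥ 1, c * k ^ β / k = t ∧ c * k ^ β = c * (t / c) ^ (β / (β - 1)) := by
  have htc : 0 < t / c := div_pos (hc.trans_le hct) hc
  refine ⟨(t / c) ^ (1 / (β - 1)),
    one_le_rpow ((one_le_div hc).2 hct) (one_div_nonneg.2 (by linarith)), ?_,
    by rw [rpow_one_div_sub_one_rpow htc.le]⟩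
  rw [mul_div_assoc, ← rpow_sub_one (rpow_pos_of_pos htc _).ne',
    rpow_one_div_sub_one_rpow_sub_one hβ htc.le,
    mul_div_cancel₀ t hc.ne']

lemma mul_phiOf_le_phiOf_mul (hβ : 1 < β) (hc : 0 < c) (hct : c ≤ t) (hpos : ∀ r > 0, 0 < Ψ r)
    (hup : ∀ r > 0, ∀ k ≥ 1, Ψ (k * r) ≤ c * k ^ β * Ψ r)
    (hbdd : BddAbove {v | ∃ r > (0 : ℝ), v = t * s / r - 1 / Ψ r}) :
    c * (t / c) ^ (β / (β - 1)) * PhiOf Ψ s ≤ PhiOf Ψ (t * s) := by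
  obtain ⟨k, hk, hbk, hb⟩ := exists_scaling_factor hβ hc hct
  rw [← hb, ← hbk]
  rw [← hbk] at hbdd
  exact mul_phiOf_le_phiOf_div_mul hpos (by positivity) (by linarith) (fun r hr => hup r hr k hk)
    hbdd

section LowerScaling

variable (hβ : 1 < β) (hc : 0 < c) (hpos : ∀ r > 0, 0 < Ψ r)
  (hlow : ∀ r > 0, ∀ k ≥ 1, c * k ^ β * Ψ r ≤ Ψ (k * r))
include hβ hc hpos hlow

/-- For `r < 1` the lower scaling bound gives `1 / Ψ r ≥ (c / Ψ 1) * r⁻¹ ^ β`, which beats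
`s / r` since `β > 1`. -/
lemma bddAbove_phiOf_set (hs : 0 ≤ s) : BddAbove {v | ∃ r > (0 : ℝ), v = s / r - 1 / Ψ r} := by
  have hΨ1 := hpos 1 one_pos
  set a := c / Ψ 1
  refine ⟨s + s * (s / a) ^ (1 / (β - 1)), ?_⟩
  rintro _ ⟨r, hr, rfl⟩
  have hΨr := hpos r hr
  have hM : 0 ≤ s * (s / a) ^ (1 / (β - 1)) := by positivity
  rcases le_or_gt 1 r with h1 | h1
  · have : s / r ≤ s := div_le_self hs h1
    have : 0 < 1 / Ψ r := by positivity
    linarith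
  · have hx : 1 ≤ r⁻¹ := one_le_inv₀ hr |>.2 h1.le
    have hscale := hlow r hr r⁻¹ hx
    rw [inv_mul_cancel₀ hr.ne'] at hscale
    have hinv : a * r⁻¹ ^ β ≤ 1 / Ψ r := by
      rw [le_div_iff₀ hΨr, div_mul_eq_mul_div, div_mul_eq_mul_div, div_le_one hΨ1]
      exact hscale
    have := mul_sub_mul_rpow_le hβ hs (by positivity : 0 < a) (inv_nonneg.2 hr.le)
    rw [div_eq_mul_inv]
    linarith

lemma phiOf_pos (hs : 0 < s) : 0 < PhiOf Ψ s := by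
  have hΨ1 := hpos 1 one_pos
  obtain ⟨k, hk1, hkβ⟩ : ∃ k : ℝ, 1 ≤ k ∧ 1 / (s * c * Ψ 1) < k ^ (β - 1) :=
    ((eventually_ge_atTop 1).and
      ((tendsto_rpow_atTop (by linarith)).eventually_gt_atTop _)).exists
  have hk : 0 < k := by linarith
  have hscale := hlow 1 one_pos k hk1
  rw [mul_one] at hscale
  have hkΨ : k < s * Ψ k := by
    rw [div_lt_iff₀ (by positivity)] at hkβ
    calc k = 1 * k := (one_mul k).symm
      _ < k ^ (β - 1) * (s * c * Ψ 1) * k := by gcongr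
      _ = s * (c * k ^ β * Ψ 1) := by rw [rpow_sub_one hk.ne']; field_simp
      _ ≤ s * Ψ k := by gcongr
  calc (0 : ℝ) < s / k - 1 / Ψ k := by
        rw [sub_pos, div_lt_div_iff₀ (hpos k hk) hk, one_mul]
        linarith
    _ ≤ PhiOf Ψ s := le_phiOf (bddAbove_phiOf_set hβ hc hpos hlow hs.le) hk

lemma phiOf_mul_le (hct : c ≤ t) (hs : 0 < s) :
    PhiOf Ψ (t * s) ≤ c * (t / c) ^ (β / (β - 1)) * PhiOf Ψ s := by
  obtain ⟨k, hk, hbk, hb⟩ := exists_scaling_factor hβ hc hct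
  rw [← hb]
  conv_lhs => rw [← hbk]
  exact phiOf_div_mul_le_mul_phiOf hpos (by positivity) (by linarith)
    (fun r hr => hlow r hr k hk) (bddAbove_phiOf_set hβ hc hpos hlow hs.le)

end LowerScaling

end Legendre

section Regular

variable {Ψ : ℝ → ℝ} {β C s t : ℝ}

lemma scaling_bounds_of_ratio_bounds {β₁ β₂ r k : ℝ} (hpos : ∀ r > 0, 0 < Ψ r)
    (hreg : ∀ r R : ℝ, 0 < r → r ≤ R →
      C⁻¹ * (R / r) ^ β₁ ≤ Ψ R / Ψ r ∧ Ψ R / Ψ r ≤ C * (R / r) ^ β₂)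
    (hr : 0 < r) (hk : 1 ≤ k) :
    C⁻¹ * k ^ β₁ * Ψ r ≤ Ψ (k * r) ∧ Ψ (k * r) ≤ C * k ^ β₂ * Ψ r := by
  have h := hreg r (k * r) hr (le_mul_of_one_le_left hr.le hk)
  rwa [mul_div_cancel_right₀ k hr.ne', le_div_iff₀ (hpos r hr), div_le_iff₀ (hpos r hr)] at h

lemma phiOf_mul_le_rpow_mul (hβ : 1 < β) (hC : 1 ≤ C) (hpos : ∀ r > 0, 0 < Ψ r)
    (hlow : ∀ r > 0, ∀ k ≥ 1, C⁻¹ * k ^ β * Ψ r ≤ Ψ (k * r)) (ht : 1 ≤ t) (hs : 0 < s) :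
    PhiOf Ψ (t * s) ≤ (C * t) ^ (β / (β - 1)) * PhiOf Ψ s := by
  have hC₀ : 0 < C⁻¹ := inv_pos.2 (by linarith)
  have hΦ := (phiOf_pos hβ hC₀ hpos hlow hs).le
  calc PhiOf Ψ (t * s) ≤ C⁻¹ * (t / C⁻¹) ^ (β / (β - 1)) * PhiOf Ψ s :=
        phiOf_mul_le hβ hC₀ hpos hlow ((inv_le_one_of_one_le₀ hC).trans ht) hs
    _ ≤ (C * t) ^ (β / (β - 1)) * PhiOf Ψ s := by
        rw [div_inv_eq_mul, mul_comm t C, mul_assoc]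
        exact mul_le_of_le_one_left (by positivity) (inv_le_one_of_one_le₀ hC)

lemma div_rpow_mul_phiOf_le (hβ : 1 < β) (hC : 1 ≤ C) (hpos : ∀ r > 0, 0 < Ψ r)
    (hup : ∀ r > 0, ∀ k ≥ 1, Ψ (k * r) ≤ C * k ^ β * Ψ r)
    (hbdd : BddAbove {v | ∃ r > (0 : ℝ), v = t * s / r - 1 / Ψ r}) (hΦ : 0 ≤ PhiOf Ψ s)
    (ht : 1 ≤ t) (hs : 0 ≤ s) :
    (t / C) ^ (β / (β - 1)) * PhiOf Ψ s ≤ PhiOf Ψ (t * s) := by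
  have htC : 0 ≤ t / C := div_nonneg (by linarith) (by linarith)
  rcases le_or_gt C t with hCt | htC'
  · calc (t / C) ^ (β / (β - 1)) * PhiOf Ψ s ≤ C * (t / C) ^ (β / (β - 1)) * PhiOf Ψ s := by
          gcongr
          exact le_mul_of_one_le_left (by positivity) hC
      _ ≤ PhiOf Ψ (t * s) := mul_phiOf_le_phiOf_mul hβ (by linarith) hCt hpos hup hbdd
  · calc (t / C) ^ (β / (β - 1)) * PhiOf Ψ s ≤ PhiOf Ψ s :=
          mul_le_of_le_one_left hΦ <| rpow_le_one htC ((div_le_one (by linarith)).2 htC'.le)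
            (div_nonneg (by linarith) (by linarith))
      _ ≤ PhiOf Ψ (t * s) := phiOf_mono hbdd (le_mul_of_one_le_left hs ht)

end Regular

theorem stmt_6_general (Ψ : ℝ → ℝ) (β₁ β₂ C₁ : ℝ)
    (hβ₁ : 1 < β₁) (hβ : β₁ ≤ β₂) (hC₁ : 1 < C₁)
    (hpos : ∀ r > (0 : ℝ), 0 < Ψ r)
    (hreg : ∀ r R : ℝ, 0 < r → r ≤ R →
      C₁⁻¹ * (R / r) ^ β₁ ≤ Ψ R / Ψ r ∧ Ψ R / Ψ r ≤ C₁ * (R / r) ^ β₂) :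
    ∃ C₂ > (0 : ℝ), ∀ s S : ℝ, 0 < s → s ≤ S →
      C₂⁻¹ * (S / s) ^ (β₂ / (β₂ - 1)) ≤ PhiOf Ψ S / PhiOf Ψ s ∧
      PhiOf Ψ S / PhiOf Ψ s ≤ C₂ * (S / s) ^ (β₁ / (β₁ - 1)) := by
  have hβ₂ : 1 < β₂ := hβ₁.trans_le hβ
  have hC₀ : 0 < C₁ := by linarith
  have hlow : ∀ r > 0, ∀ k ≥ 1, C₁⁻¹ * k ^ β₁ * Ψ r ≤ Ψ (k * r) := fun r hr k hk =>
    (scaling_bounds_of_ratio_bounds hpos hreg hr hk).1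
  have hup : ∀ r > 0, ∀ k ≥ 1, Ψ (k * r) ≤ C₁ * k ^ β₂ * Ψ r := fun r hr k hk =>
    (scaling_bounds_of_ratio_bounds hpos hreg hr hk).2
  refine ⟨max (C₁ ^ (β₁ / (β₁ - 1))) (C₁ ^ (β₂ / (β₂ - 1))), by positivity,
    fun s S hs hsS => ?_⟩
  obtain ⟨t, ht, rfl⟩ : ∃ t, 1 ≤ t ∧ S = t * s :=
    ⟨S / s, (one_le_div hs).2 hsS, (div_mul_cancel₀ S hs.ne').symm⟩
  have hΦ := phiOf_pos hβ₁ (inv_pos.2 hC₀) hpos hlow hs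
  have hbdd := bddAbove_phiOf_set hβ₁ (inv_pos.2 hC₀) hpos hlow (by positivity : 0 ≤ t * s)
  rw [mul_div_cancel_right₀ t hs.ne', le_div_iff₀ hΦ, div_le_iff₀ hΦ]
  constructor
  · calc _ ≤ (t / C₁) ^ (β₂ / (β₂ - 1)) * PhiOf Ψ s := by
          rw [div_rpow (by linarith) hC₀.le, div_eq_inv_mul (t ^ _)]
          gcongr
          exact le_max_right _ _
      _ ≤ PhiOf Ψ (t * s) := div_rpow_mul_phiOf_le hβ₂ hC₁.le hpos hup hbdd hΦ.le ht hs.le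
  · calc PhiOf Ψ (t * s) ≤ (C₁ * t) ^ (β₁ / (β₁ - 1)) * PhiOf Ψ s :=
          phiOf_mul_le_rpow_mul hβ₁ hC₁.le hpos hlow ht hs
      _ ≤ _ := by
          rw [mul_rpow hC₀.le (by linarith)]
          gcongr
          exact le_max_left _ _

theorem stmt_6 (Ψ : ℝ → ℝ) (β₁ β₂ C₁ : ℝ)
    (hβ₁ : 1 < β₁) (hβ : β₁ ≤ β₂) (hC₁ : 1 < C₁)
    (hpos : ∀ r > (0 : ℝ), 0 < Ψ r)
    (hcont : ContinuousOn Ψ (Set.Ioi 0))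
    (hmono : StrictMonoOn Ψ (Set.Ioi 0))
    (hsurj : ∀ t > (0 : ℝ), ∃ r > (0 : ℝ), Ψ r = t)
    (hreg : ∀ r R : ℝ, 0 < r → r ≤ R →
      C₁⁻¹ * (R / r) ^ β₁ ≤ Ψ R / Ψ r ∧ Ψ R / Ψ r ≤ C₁ * (R / r) ^ β₂) :
    ∃ C₂ > (0 : ℝ), ∀ s S : ℝ, 0 < s → s ≤ S →
      C₂⁻¹ * (S / s) ^ (β₂ / (β₂ - 1)) ≤ PhiOf Ψ S / PhiOf Ψ s ∧
      PhiOf Ψ S / PhiOf Ψ s ≤ C₂ * (S / s) ^ (β₁ / (β₁ - 1)) :=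
  stmt_6_general Ψ β₁ β₂ C₁ hβ₁ hβ hC₁ hpos hreg
end

section
/- Let Ψ : (0,∞) → (0,∞) be a continuous increasing bijection satisfying C₁⁻¹ (R/r)^{β₁} ≤ Ψ(R)/Ψ(r) ≤ C₁ (R/r)^{β₂} for all 0 < r ≤ R, with 1 < β₁ ≤ β₂ and C₁ > 1. Define Φ(s) = sup_{r>0} (s/r − 1/Ψ(r)). Then there is a constant C > 0 such that t · Φ(2 Ψ⁻¹(t)/t) ≤ C for all t > 0. -/
open Metric Set Filter

theorem stmt_7 (Ψ Ψinv : ℝ → ℝ) (β₁ β₂ C₁ : ℝ)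
    (hβ₁ : 1 < β₁) (hβ : β₁ ≤ β₂) (hC₁ : 1 < C₁)
    (hpos : ∀ r > (0 : ℝ), 0 < Ψ r)
    (hcont : ContinuousOn Ψ (Set.Ioi 0))
    (hmono : StrictMonoOn Ψ (Set.Ioi 0))
    (hinv : ∀ t > (0 : ℝ), 0 < Ψinv t ∧ Ψ (Ψinv t) = t)
    (hreg : ∀ r R : ℝ, 0 < r → r ≤ R →
      C₁⁻¹ * (R / r) ^ β₁ ≤ Ψ R / Ψ r ∧ Ψ R / Ψ r ≤ C₁ * (R / r) ^ β₂) :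
    ∃ C > (0 : ℝ), ∀ t > (0 : ℝ), t * PhiOf Ψ (2 * Ψinv t / t) ≤ C := by

  have hC₁0 : (0:ℝ) < C₁ := lt_trans one_pos hC₁
  set M : ℝ := (4*C₁) ^ ((β₁-1)⁻¹) with hM
  have hM0 : 0 < M := Real.rpow_pos_of_pos (by linarith) _
  refine ⟨2 + 2*M, by linarith, ?_⟩
  intro t ht
  obtain ⟨ha0, haΨ⟩ := hinv t ht
  set a := Ψinv t with ha
  rw [mul_comm, ← le_div_iff₀ ht]
  refine Real.sSup_le ?_ (by positivity)
  rintro v ⟨r, hr0, rfl⟩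
  have hΨr : 0 < Ψ r := hpos r hr0
  rw [le_div_iff₀ ht]
  have hEq : (2 * a / t / r - 1 / Ψ r) * t = 2 * (a / r) - t / Ψ r := by
    field_simp
  rw [hEq]
  rcases le_or_gt a r with hle | hlt
  · have h1 : 2 * (a / r) ≤ 2 := by
      have : a / r ≤ 1 := (div_le_one hr0).mpr hle
      linarith
    have h2 : 0 ≤ t / Ψ r := by positivity
    linarith
  · have hkey := (hreg r a hr0 hlt.le).1
    rw [haΨ] at hkey
    set u := a / r with hu
    have hu1 : 1 < u := (one_lt_div hr0).mpr hlt
    have hu0 : 0 < u := by linarith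
    rcases le_or_gt u M with huM | huM
    · have h2 : 0 ≤ t / Ψ r := by
        have : 0 < C₁⁻¹ * u ^ β₁ := by positivity
        linarith
      linarith
    · -- u > M : show t / Ψ r ≥ 4 u
      have hpow : (4*C₁) ≤ u ^ (β₁ - 1) := by
        have hMp : M ^ (β₁ - 1) = 4*C₁ := by
          rw [hM, ← Real.rpow_mul (by linarith), inv_mul_cancel₀ (by linarith), Real.rpow_one]
        calc (4*C₁) = M ^ (β₁-1) := hMp.symm
          _ ≤ u ^ (β₁-1) := Real.rpow_le_rpow hM0.le huM.le (by linarith)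
      have husplit : u ^ β₁ = u ^ (β₁ - 1) * u := by
        rw [← Real.rpow_add_one hu0.ne' (β₁ - 1)]
        congr 1; ring
      have h4u : 4 * u ≤ t / Ψ r := by
        have h1 : C₁⁻¹ * ((4*C₁) * u) ≤ C₁⁻¹ * (u ^ (β₁-1) * u) := by
          apply mul_le_mul_of_nonneg_left _ (by positivity)
          exact mul_le_mul_of_nonneg_right hpow hu0.le
        have h2 : C₁⁻¹ * ((4*C₁) * u) = 4 * u := by
          field_simp
        rw [husplit] at hkey
        linarith
      nlinarith
end

section
/- Let (X,d) be a metric space and suppose there exist constants C > 1 and 0 < β₁ ≤ β₂ and an increasing bijection Ψ:(0,∞)→(0,∞) with C⁻¹(R/r)^{β₁} ≤ Ψ(R)/Ψ(r) ≤ C(R/r)^{β₂} for 0 < r ≤ R, such that: (i) for every x ∈ X and 0 < r < diam(X) with B(x,r) ≠ X, B(x,r) \ B(x,r/2) ≠ ∅ (uniform perfectness with constant 2); and (ii) for all x,y with d(x,y) ≥ ε > 0, (d(x,y)/ε)² ≤ d_ε(x,y)²/ε² ≤ C Ψ(d(x,y))/Ψ(ε). Then there exists C₁ ≥ 1 such that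 Ψ(r)/Ψ(s) ≥ C₁⁻¹ (r/s)² for all 0 < s ≤ r < diam(X,d). -/
open Metric Set Filter

theorem stmt_17 {X : Type*} [MetricSpace X] (Ψ : ℝ → ℝ) (C β₁ β₂ : ℝ)
    (hC : 1 < C) (hβ₁ : 0 < β₁) (hβ : β₁ ≤ β₂)
    (hpos : ∀ r > (0 : ℝ), 0 < Ψ r)
    (hmono : StrictMonoOn Ψ (Set.Ioi 0))
    (hreg : ∀ r R : ℝ, 0 < r → r ≤ R →
      C⁻¹ * (R / r) ^ β₁ ≤ Ψ R / Ψ r ∧ Ψ R / Ψ r ≤ C * (R / r) ^ β₂)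
    (hperf : ∀ (x : X), ∀ r > (0 : ℝ), Metric.ball x r ≠ Set.univ →
      (Metric.ball x r \ Metric.ball x (r / 2)).Nonempty)
    (hchain : ∀ x y : X, ∀ ε : ℝ, 0 < ε → ε ≤ dist x y →
      (dist x y / ε) ^ (2 : ℕ) ≤ ((chainDist ε x y).toReal / ε) ^ (2 : ℕ) ∧
      ((chainDist ε x y).toReal / ε) ^ (2 : ℕ) ≤ C * Ψ (dist x y) / Ψ ε) :
    ∃ C₁ ≥ (1 : ℝ), ∀ s r : ℝ, 0 < s → s ≤ r →
      ENNReal.ofReal r < EMetric.diam (Set.univ : Set X) →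
      C₁⁻¹ * (r / s) ^ (2 : ℕ) ≤ Ψ r / Ψ s := by

  refine ⟨4 * C, by nlinarith, fun s r hs hsr hdiam => ?_⟩
  have hr : (0:ℝ) < r := lt_of_lt_of_le hs hsr
  have hΨs := hpos s hs
  have hΨr := hpos r hr
  -- get a point y far from some x
  obtain ⟨x, -, y, -, hxy⟩ :
      ∃ x ∈ (Set.univ : Set X), ∃ y ∈ (Set.univ : Set X),
        ENNReal.ofReal r < edist x y := by
    by_contra h
    push_neg at h
    exact absurd (EMetric.diam_le_iff.2 h) (not_le.2 hdiam)
  have hdxy : r < dist x y := by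
    have := hxy
    rw [edist_dist] at this
    exact (ENNReal.ofReal_lt_ofReal_iff_of_nonneg hr.le).1 this
  have hball : Metric.ball x r ≠ Set.univ := by
    intro h
    have : y ∈ Metric.ball x r := h ▸ Set.mem_univ y
    rw [Metric.mem_ball, dist_comm] at this
    linarith
  obtain ⟨z, hz1, hz2⟩ := hperf x r hr hball
  rw [Metric.mem_ball] at hz1
  rw [Metric.mem_ball, not_lt] at hz2
  have hd : dist x z = dist z x := dist_comm x z
  -- dist x z ∈ [r/2, r)
  have hdl : r / 2 ≤ dist x z := hd ▸ hz2
  have hdu : dist x z < r := hd ▸ hz1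
  have hdpos : 0 < dist x z := lt_of_lt_of_le (by linarith) hdl
  have hΨd : Ψ (dist x z) ≤ Ψ r := (hmono.monotoneOn hdpos hr hdu.le)
  by_cases hcase : s ≤ dist x z
  · have h2 := (hchain x z s hs hcase).1.trans (hchain x z s hs hcase).2
    -- (d/s)^2 ≤ C Ψ(d)/Ψ(s)
    have h3 : (r / (2 * s)) ^ (2:ℕ) ≤ C * Ψ r / Ψ s := by
      have hle : r / (2 * s) ≤ dist x z / s := by
        rw [div_le_div_iff₀ (by positivity) hs]
        nlinarith
      have := pow_le_pow_left₀ (by positivity) hle 2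
      have hCΨ : C * Ψ (dist x z) / Ψ s ≤ C * Ψ r / Ψ s := by
        gcongr
      linarith
    rw [inv_mul_le_iff₀ (by positivity)]
    have he : (r / s) ^ (2:ℕ) = 4 * (r / (2 * s)) ^ (2:ℕ) := by
      field_simp; ring
    rw [he]
    rw [mul_div_assoc] at h3
    linarith
  · -- s > dist x z ≥ r/2, so r/s < 2
    push_neg at hcase
    have hrs : r < 2 * s := by linarith
    have h1 := (hreg s r hs hsr).1
    have h2 : (1:ℝ) ≤ (r / s) ^ β₁ :=
      Real.one_le_rpow (by rw [le_div_iff₀ hs]; linarith) hβ₁.le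
    have h3 : C⁻¹ ≤ Ψ r / Ψ s := by
      calc C⁻¹ = C⁻¹ * 1 := by ring
        _ ≤ C⁻¹ * (r / s) ^ β₁ := by
            apply mul_le_mul_of_nonneg_left h2 (by positivity)
        _ ≤ _ := h1
    have h4 : (r / s) ^ (2:ℕ) < 4 := by
      have : r / s < 2 := by rw [div_lt_iff₀ hs]; linarith
      nlinarith [div_nonneg hr.le hs.le]
    rw [inv_mul_le_iff₀ (by positivity)]
    calc (r/s)^(2:ℕ) ≤ 4 := h4.le
      _ = (4 * C) * C⁻¹ := by field_simp
      _ ≤ (4 * C) * (Ψ r / Ψ s) := by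
          apply mul_le_mul_of_nonneg_left h3 (by positivity)
end

section
/- Let (X,d) be a metric space such that for all ε > 0 and x, y ∈ X there exists K > 1 with d(x,y) ≤ d_ε(x,y) ≤ K d(x,y) (K uniform in ε, x, y). Define N_ε(x,y) as the minimal length of an ε-chain from x to y. Then there exists a constant K' such that for all x ≠ y and all 0 < ε ≤ d(x,y): N_ε(x,y) ≤ K' d(x,y)/ε, and N_ε(x,y) ≥ d(x,y)/ε. -/
open Metric Set Filter

theorem stmt_18 {X : Type*} [MetricSpace X] (K : ℝ) (hK : 1 < K)
    (hchain : ∀ ε > (0 : ℝ), ∀ x y : X,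
      ENNReal.ofReal (dist x y) ≤ chainDist ε x y ∧
      chainDist ε x y ≤ ENNReal.ofReal (K * dist x y)) :
    ∃ K' > (0 : ℝ), ∀ x y : X, ∀ ε : ℝ, x ≠ y → 0 < ε → ε ≤ dist x y →
      (chainCount ε x y : ℝ) ≤ K' * dist x y / ε ∧
      dist x y / ε ≤ (chainCount ε x y : ℝ) := by
  classical
  refine ⟨2 * K + 3, by linarith, ?_⟩
  intro x y ε hxy hε hεd
  have hD : 0 < dist x y := dist_pos.mpr hxy
  set D := dist x y with hDdef
  -- Step 1: obtain a chain with small total length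
  obtain ⟨hlow, hupp⟩ := hchain ε hε x y
  have h1 : chainDist ε x y < ENNReal.ofReal (K * D + ε) := by
    refine lt_of_le_of_lt hupp ?_
    rw [ENNReal.ofReal_lt_ofReal_iff (by positivity)]
    linarith
  rw [chainDist, iInf_lt_iff] at h1
  obtain ⟨⟨⟨N, c⟩, hc⟩, hsum⟩ := h1
  simp only at hsum
  rw [← ENNReal.ofReal_sum_of_nonneg (fun i _ => dist_nonneg)] at hsum
  set S : ℝ := ∑ i ∈ Finset.range N, dist (c i) (c (i + 1)) with hSdef
  have hS : S < K * D + ε := by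
    have hnn : (0:ℝ) ≤ S := Finset.sum_nonneg fun i _ => dist_nonneg
    rwa [ENNReal.ofReal_lt_ofReal_iff (by positivity)] at hsum
  obtain ⟨hc0, hcN, hcstep⟩ := hc
  -- partial sums
  set s : ℕ → ℝ := fun n => ∑ i ∈ Finset.range n, dist (c i) (c (i + 1)) with hsdef
  have hs_mono : ∀ a b, a ≤ b → s a ≤ s b := by
    intro a b hab
    exact Finset.sum_le_sum_of_subset_of_nonneg (Finset.range_subset_range.mpr hab)
      (fun i _ _ => dist_nonneg)
  have hdist_s : ∀ a b, a ≤ b → dist (c a) (c b) ≤ s b - s a := by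
    intro a b hab
    have := dist_le_Ico_sum_dist c hab
    rwa [Finset.sum_Ico_eq_sub _ hab] at this
  -- Step 2: greedy subsampling
  set T : ℕ → Set ℕ := fun a => {m | m ≤ N ∧ dist (c a) (c m) < ε} with hTdef
  have hTbdd : ∀ a, BddAbove (T a) := fun a => ⟨N, fun m hm => hm.1⟩
  have hTself : ∀ a, a ≤ N → a ∈ T a := fun a ha => ⟨ha, by simp [hε]⟩
  have hTmem : ∀ a, a ≤ N → sSup (T a) ∈ T a := fun a ha =>
    Nat.sSup_mem ⟨a, hTself a ha⟩ (hTbdd a)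
  set j : ℕ → ℕ := fun k => Nat.rec 0 (fun _ jk => sSup (T jk)) k with hjdef
  have hj0 : j 0 = 0 := rfl
  have hjsucc : ∀ k, j (k + 1) = sSup (T (j k)) := fun k => rfl
  have hjle : ∀ k, j k ≤ N := by
    intro k
    induction k with
    | zero => exact Nat.zero_le N
    | succ k ih => rw [hjsucc]; exact (hTmem _ ih).1
  have hjstep : ∀ k, dist (c (j k)) (c (j (k + 1))) < ε := by
    intro k
    rw [hjsucc]
    exact (hTmem _ (hjle k)).2
  have hjmono1 : ∀ k, j k ≤ j (k + 1) := by
    intro k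
    rw [hjsucc]
    exact le_csSup (hTbdd _) (hTself _ (hjle k))
  have hjmono : Monotone j := monotone_nat_of_le_succ hjmono1
  have hjlt : ∀ k, j k < N → j k + 1 ≤ j (k + 1) := by
    intro k hk
    rw [hjsucc]
    exact le_csSup (hTbdd _) ⟨hk, hcstep _ hk⟩
  have hjN : ∀ k, j k = N → j (k + 1) = N := by
    intro k hk
    refine le_antisymm (hjle (k + 1)) ?_
    rw [hjsucc]; exact hk ▸ le_csSup (hTbdd _) (hTself _ (by omega))
  have hjgrow : ∀ k, min k N ≤ j k := by
    intro k
    induction k with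
    | zero => simp
    | succ k ih =>
      rcases lt_or_eq_of_le (hjle k) with h | h
      · have := hjlt k h
        omega
      · rw [hjN k h]; omega
  have hjNN : j N = N := le_antisymm (hjle N) (by have := hjgrow N; omega)
  have hMne : ({k | j k = N} : Set ℕ).Nonempty := ⟨N, hjNN⟩
  obtain ⟨M, hjM, hMleN, hkM⟩ :
      ∃ M : ℕ, j M = N ∧ M ≤ N ∧ ∀ k, k < M → j k < N := by
    refine ⟨sInf {k | j k = N}, Nat.sInf_mem hMne, Nat.sInf_le hjNN, ?_⟩
    intro k hk
    have h := Nat.notMem_of_lt_sInf hk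
    simp only [Set.mem_setOf_eq] at h
    have := hjle k
    omega
  -- the subsampled chain is an ε-chain
  have hchain' : IsEpsChain ε x y M (fun k => c (j k)) := by
    refine ⟨?_, ?_, fun k _ => hjstep k⟩
    · show c (j 0) = x; rw [hj0]; exact hc0
    · show c (j M) = y; rw [hjM]; exact hcN
  have hcount_le : chainCount ε x y ≤ M := Nat.sInf_le ⟨fun k => c (j k), hchain'⟩
  -- separation property
  have hsep : ∀ k, k + 2 ≤ M → ε ≤ dist (c (j k)) (c (j (k + 2))) := by
    intro k hk
    have h1 : j (k + 1) < N := hkM (k + 1) (by omega)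
    have h2' : j (k + 1) + 1 ≤ j (k + 2) := hjlt (k + 1) h1
    by_contra hlt
    push_neg at hlt
    have hmem : j (k + 2) ∈ T (j k) := ⟨hjle (k + 2), hlt⟩
    have := le_csSup (hTbdd (j k)) hmem
    rw [← hjsucc] at this
    omega
  -- telescoping bound
  obtain ⟨m, hmdef⟩ : ∃ m : ℕ, m = M / 2 := ⟨_, rfl⟩
  have hkey : (m : ℝ) * ε ≤ S := by
    have tel : ∑ k ∈ Finset.range m, (s (j (2 * (k + 1))) - s (j (2 * k)))
        = s (j (2 * m)) - s (j (2 * 0)) := Finset.sum_range_sub (fun k => s (j (2 * k))) m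
    have hterm : ∀ k ∈ Finset.range m, ε ≤ s (j (2 * (k + 1))) - s (j (2 * k)) := by
      intro k hk
      rw [Finset.mem_range] at hk
      have h2k : 2 * k + 2 ≤ M := by omega
      have := hsep (2 * k) h2k
      have heq : 2 * (k + 1) = 2 * k + 2 := by ring
      rw [heq]
      have hmono2 : j (2 * k) ≤ j (2 * k + 2) := hjmono (by omega : 2 * k ≤ 2 * k + 2)
      exact this.trans (hdist_s _ _ hmono2)
    calc (m : ℝ) * ε = ∑ _k ∈ Finset.range m, ε := by
          rw [Finset.sum_const, Finset.card_range, nsmul_eq_mul]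
      _ ≤ ∑ k ∈ Finset.range m, (s (j (2 * (k + 1))) - s (j (2 * k))) :=
          Finset.sum_le_sum hterm
      _ = s (j (2 * m)) - s (j (2 * 0)) := tel
      _ ≤ S := by
          have h1 : s (j (2 * m)) ≤ s N := hs_mono _ _ (hjle _)
          have h2 : (0:ℝ) ≤ s (j (2 * 0)) := Finset.sum_nonneg fun i _ => dist_nonneg
          have : s N = S := rfl
          linarith
  constructor
  · -- upper bound
    have hM2 : M ≤ 2 * m + 1 := by omega
    have hcount : (chainCount ε x y : ℝ) ≤ 2 * (m : ℝ) + 1 := by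
      have : (chainCount ε x y : ℝ) ≤ (M : ℝ) := Nat.cast_le.mpr hcount_le
      have h2 : (M : ℝ) ≤ 2 * (m : ℝ) + 1 := by exact_mod_cast Nat.cast_le.mpr hM2
      linarith
    rw [le_div_iff₀ hε]
    have h1 : (2 * (m : ℝ) + 1) * ε ≤ 2 * S + ε := by
      have := hkey
      nlinarith
    have h2 : (chainCount ε x y : ℝ) * ε ≤ (2 * (m : ℝ) + 1) * ε :=
      mul_le_mul_of_nonneg_right hcount hε.le
    nlinarith
  · -- lower bound
    have hne : ({n | ∃ c : ℕ → X, IsEpsChain ε x y n c} : Set ℕ).Nonempty :=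
      ⟨N, c, hc0, hcN, hcstep⟩
    have hmem₀ : ∃ c₀ : ℕ → X, IsEpsChain ε x y (chainCount ε x y) c₀ := Nat.sInf_mem hne
    obtain ⟨c₀, h₀, h₀N, h₀step⟩ := hmem₀
    set N₀ : ℕ := chainCount ε x y with hN₀
    have hd : D ≤ (N₀ : ℝ) * ε := by
      have h1 : dist (c₀ 0) (c₀ N₀) ≤ ∑ i ∈ Finset.range N₀, dist (c₀ i) (c₀ (i + 1)) :=
        dist_le_range_sum_dist c₀ N₀
      have h2 : ∑ i ∈ Finset.range N₀, dist (c₀ i) (c₀ (i + 1)) ≤ (N₀ : ℝ) * ε := by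
        calc ∑ i ∈ Finset.range N₀, dist (c₀ i) (c₀ (i + 1))
            ≤ ∑ _i ∈ Finset.range N₀, ε :=
              Finset.sum_le_sum fun i hi => (h₀step i (Finset.mem_range.mp hi)).le
          _ = (N₀ : ℝ) * ε := by rw [Finset.sum_const, Finset.card_range, nsmul_eq_mul]
      rw [h₀, h₀N] at h1
      linarith
    rw [div_le_iff₀ hε]
    exact hd
end
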